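/- Let W be a unitary n×n complex matrix, and let D = ∑_{j=1}^r α_j P_j with P_1,...,P_r pairwise orthogonal projections summing to 1_n and α_1,...,α_r distinct points of the closed unit disk. Set s := min_{j≠k} |α_j − α_k| and X := ∑_j P_j W P_j. Then ‖W − X‖ ≤ (r(r−1)/s)·‖W D W* − D‖. -/

import Mathlib

open Matrix
open scoped Matrix.Norms.L2Operator

/-!
Sandwiching the commutator `W D - D W = (W D W⋆ - D) W` between `Pⱼ` and `Pₖ` gives
`(αₖ - αⱼ) Pⱼ W Pₖ`, so each off-diagonal block `Pⱼ W Pₖ` has norm at most `‖W D W⋆ - D‖ / s`.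
Since `∑ Pⱼ = 1`, `W - X` is the sum of the `r (r - 1)` off-diagonal blocks.
-/

open Finset

section OrthogonalIdempotents

variable {A ι : Type*} [Ring A] [Fintype ι] {P : ι → A}

lemma sub_sum_diag_eq_sum_offDiag [DecidableEq ι] (hsum : ∑ j, P j = 1) (Y : A) :
    Y - ∑ j, P j * Y * P j = ∑ jk ∈ univ.offDiag, P jk.1 * Y * P jk.2 := by
  have hY : Y = ∑ j, P j * Y * P j + ∑ jk ∈ univ.offDiag, P jk.1 * Y * P jk.2 :=
    calc Y = (∑ j, P j) * Y * ∑ k, P k := by rw [hsum, one_mul, mul_one]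
      _ = ∑ jk ∈ univ ×ˢ univ, P jk.1 * Y * P jk.2 := by
        simp only [sum_mul, mul_sum, sum_product]
        exact sum_comm
      _ = _ := by
        rw [← diag_union_offDiag, sum_union (disjoint_diag_offDiag _), sum_diag]
  nth_rw 1 [hY]
  exact add_sub_cancel_left _ _

variable {R : Type*} [Ring R] [Module R A]
  (hidem : ∀ j, IsIdempotentElem (P j)) (horth : ∀ j k, j ≠ k → P j * P k = 0)
include hidem horth

lemma mul_sum_smul_of_orthogonal [SMulCommClass R A A] (c : ι → R) (j : ι) :
    P j * ∑ k, c k • P k = c j • P j := by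
  rw [mul_sum, sum_eq_single j (fun k _ hkj => by rw [mul_smul_comm, horth j k hkj.symm,
    smul_zero]) (fun h => absurd (mem_univ j) h), mul_smul_comm, (hidem j).eq]

lemma sum_smul_mul_of_orthogonal [IsScalarTower R A A] (c : ι → R) (k : ι) :
    (∑ j, c j • P j) * P k = c k • P k := by
  rw [sum_mul, sum_eq_single k (fun j _ hjk => by rw [smul_mul_assoc, horth j k hjk, smul_zero])
    (fun h => absurd (mem_univ k) h), smul_mul_assoc, (hidem k).eq]

lemma mul_commutator_mul_eq_smul [IsScalarTower R A A] [SMulCommClass R A A] (c : ι → R)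
    (Y : A) (j k : ι) :
    P j * (Y * ∑ i, c i • P i - (∑ i, c i • P i) * Y) * P k = (c k - c j) • (P j * Y * P k) := by
  have hright : P j * (Y * ∑ i, c i • P i) * P k = c k • (P j * Y * P k) := by
    rw [mul_assoc, mul_assoc Y, sum_smul_mul_of_orthogonal hidem horth, mul_smul_comm,
      mul_smul_comm, ← mul_assoc]
  have hleft : P j * ((∑ i, c i • P i) * Y) * P k = c j • (P j * Y * P k) := by
    rw [← mul_assoc (P j), mul_sum_smul_of_orthogonal hidem horth, smul_mul_assoc,
      smul_mul_assoc]
  rw [mul_sub, sub_mul, hright, hleft, sub_smul]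

end OrthogonalIdempotents

section CStarAlgebra

variable {𝕜 A ι : Type*} [NormedField 𝕜] [NormedRing A] [StarRing A] [CStarRing A]
  [NormedAlgebra 𝕜 A] [Fintype ι] {P : ι → A}

lemma norm_mul_mul_le_of_isStarProjection {p q : A} (hp : IsStarProjection p)
    (hq : IsStarProjection q) (Y : A) : ‖p * Y * q‖ ≤ ‖Y‖ :=
  calc ‖p * Y * q‖ ≤ ‖p‖ * ‖Y‖ * ‖q‖ := norm_mul₃_le
    _ ≤ 1 * ‖Y‖ * 1 := by gcongr <;> exact IsStarProjection.norm_le _ ‹_›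
    _ = ‖Y‖ := by ring

variable (hP : ∀ j, IsStarProjection (P j)) (horth : ∀ j k, j ≠ k → P j * P k = 0)
include hP horth

lemma norm_offDiag_block_le {W : A} (hW : W ∈ unitary A) (c : ι → 𝕜) {s : ℝ} (hs0 : 0 < s)
    {j k : ι} (hs : s ≤ ‖c k - c j‖) :
    ‖P j * W * P k‖ ≤ ‖W * (∑ i, c i • P i) * star W - ∑ i, c i • P i‖ / s := by
  set D := ∑ i, c i • P i
  have hcomm : (W * D * star W - D) * W = W * D - D * W := by
    rw [sub_mul, mul_assoc _ (star W), Unitary.star_mul_self_of_mem hW, mul_one]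
  have hblock : ‖c k - c j‖ * ‖P j * W * P k‖ ≤ ‖W * D * star W - D‖ :=
    calc ‖c k - c j‖ * ‖P j * W * P k‖ = ‖P j * (W * D - D * W) * P k‖ := by
          rw [mul_commutator_mul_eq_smul (fun i => (hP i).isIdempotentElem) horth, norm_smul]
      _ ≤ ‖(W * D * star W - D) * W‖ := by
          rw [hcomm]; exact norm_mul_mul_le_of_isStarProjection (hP j) (hP k) _
      _ = ‖W * D * star W - D‖ := CStarRing.norm_mul_mem_unitary _ hW
  rw [le_div_iff₀ hs0, mul_comm]
  exact (mul_le_mul_of_nonneg_right hs (norm_nonneg _)).trans hblock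

lemma norm_sub_sum_compression_le [DecidableEq ι] (hsum : ∑ j, P j = 1) {W : A}
    (hW : W ∈ unitary A) (c : ι → 𝕜) {s : ℝ} (hs0 : 0 < s)
    (hs : ∀ j k, j ≠ k → s ≤ ‖c j - c k‖) :
    ‖W - ∑ j, P j * W * P j‖ ≤ ((Fintype.card ι * (Fintype.card ι - 1) : ℕ) : ℝ) / s *
      ‖W * (∑ i, c i • P i) * star W - ∑ i, c i • P i‖ := by
  rw [sub_sum_diag_eq_sum_offDiag hsum, div_mul_eq_mul_div, mul_div_assoc,
    Nat.mul_sub_one, ← card_univ, ← offDiag_card, ← nsmul_eq_mul]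
  refine (norm_sum_le_of_le _ fun jk hjk => ?_).trans_eq (sum_const _)
  obtain ⟨-, -, hne⟩ := mem_offDiag.mp hjk
  exact norm_offDiag_block_le hP horth hW c hs0 (hs _ _ (Ne.symm hne))

end CStarAlgebra

theorem block_compression_estimate_general {n r : ℕ}
    (W : Matrix (Fin n) (Fin n) ℂ) (hW : W ∈ Matrix.unitaryGroup (Fin n) ℂ)
    (α : Fin r → ℂ)
    (P : Fin r → Matrix (Fin n) (Fin n) ℂ)
    (hPproj : ∀ j, (P j).IsHermitian ∧ P j * P j = P j)
    (hPorth : ∀ j k, j ≠ k → P j * P k = 0)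
    (hPsum : ∑ j, P j = 1)
    (D : Matrix (Fin n) (Fin n) ℂ) (hD : D = ∑ j, α j • P j)
    (s : ℝ) (hs0 : 0 < s) (hs : ∀ j k, j ≠ k → s ≤ ‖α j - α k‖)
    (X : Matrix (Fin n) (Fin n) ℂ) (hX : X = ∑ j, P j * W * P j) :
    ‖W - X‖ ≤ ((r * (r - 1) : ℕ) : ℝ) / s * ‖W * D * Wᴴ - D‖ := by
  have hP : ∀ j, IsStarProjection (P j) := fun j => ⟨(hPproj j).2, (hPproj j).1⟩
  have := norm_sub_sum_compression_le hP hPorth hPsum hW α hs0 hs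
  rwa [Fintype.card_fin, ← hD, ← hX] at this

/-- Estimate for the distance from a unitary `W` to its block-diagonal
compression `X = ∑ⱼ Pⱼ W Pⱼ`. -/
theorem block_compression_estimate {n r : ℕ}
    (W : Matrix (Fin n) (Fin n) ℂ) (hW : W ∈ Matrix.unitaryGroup (Fin n) ℂ)
    (α : Fin r → ℂ) (hα : Function.Injective α) (hαdisk : ∀ j, ‖α j‖ ≤ 1)
    (P : Fin r → Matrix (Fin n) (Fin n) ℂ)
    (hPproj : ∀ j, (P j).IsHermitian ∧ P j * P j = P j)
    (hPorth : ∀ j k, j ≠ k → P j * P k = 0)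
    (hPsum : ∑ j, P j = 1)
    (D : Matrix (Fin n) (Fin n) ℂ) (hD : D = ∑ j, α j • P j)
    (s : ℝ) (hs0 : 0 < s) (hs : ∀ j k, j ≠ k → s ≤ ‖α j - α k‖)
    (X : Matrix (Fin n) (Fin n) ℂ) (hX : X = ∑ j, P j * W * P j) :
    ‖W - X‖ ≤ ((r * (r - 1) : ℕ) : ℝ) / s * ‖W * D * Wᴴ - D‖ :=
  block_compression_estimate_general W hW α P hPproj hPorth hPsum D hD s hs0 hs X hX
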